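/- For every integer n ≥ 3, the real roots of P_n are exactly the n pairwise distinct numbers cos(kπ/(n-1)) for k = 0, 1, ..., n-1; in particular all roots of P_n are simple (have multiplicity one) and lie in the segment [-1,1]. -/

import Mathlib

/-!
For `m = p = 2`, splitting `C(N+1, i)` by Pascal's rule and applying it twice more to the second
binomial gives `f(N+1, K) = 2 f(N, K) + f(N, K-1)`, which turns into the Chebyshev recurrence
`P_{n+2} = 2x P_{n+1} - P_n` for `n ≥ 3`. From `P_3` and `P_4` this gives `P_n = (x² - 1) U_{n-2}`, and
`U_{n-2}(cos θ) sin θ = sin((n-1)θ)` makes the `n` distinct numbers `cos(kπ/(n-1))` roots of this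
degree-`n` polynomial, hence all of its roots, each simple.
-/

open Finset Polynomial Real

noncomputable section

/-- Binomial coefficient `C(a, b)` for integer lower index, zero when `b < 0` or `b > a`. -/
def chooseZ (a : ℕ) (b : ℤ) : ℤ := if 0 ≤ b then (a.choose b.toNat : ℤ) else 0

/-- `f n k m p = ∑_{i=0}^{n} (-1)^i C(n,i) C(np+m-ip, n+k)`. -/
def f (n : ℕ) (k : ℤ) (m p : ℕ) : ℤ :=
  ∑ i ∈ Finset.range (n + 1),
    (-1) ^ i * (n.choose i : ℤ) * chooseZ (n * p + m - i * p) ((n : ℤ) + k)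

/-- The coefficients `c(n,k,m,p)`. -/
def c (n : ℕ) (k : ℤ) (m p : ℕ) : ℤ :=
  if 0 ≤ k ∧ k ≤ (n : ℤ) ∧ (n : ℤ) % 2 = k % 2 ∧ 2 * (m : ℤ) ≤ (n : ℤ) + k then
    (-1) ^ ((((n : ℤ) - k) / 2).toNat) *
      f ((((n : ℤ) + k - 2 * m) / 2).toNat) (((n : ℤ) - k) / 2) m p
  else 0

/-- The polynomial `P_{n,m,p}(x) = ∑_{k=0}^n c(n,k,m,p) x^k`, as a real polynomial. -/
def P (n m p : ℕ) : Polynomial ℝ :=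
  ∑ k ∈ Finset.range (n + 1), Polynomial.C ((c n (k : ℤ) m p : ℝ)) * Polynomial.X ^ k

open Polynomial.Chebyshev

lemma chooseZ_succ (a : ℕ) (b : ℤ) : chooseZ (a + 1) b = chooseZ a b + chooseZ a (b - 1) := by
  unfold chooseZ
  rcases lt_trichotomy b 0 with h | rfl | h
  · rw [if_neg (by omega), if_neg (by omega), if_neg (by omega), add_zero]
  · norm_num
  · rw [if_pos h.le, if_pos h.le, if_pos (by omega), show b.toNat = (b - 1).toNat + 1 by omega,
      Nat.choose_succ_succ']
    push_cast
    ring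

lemma sum_range_succ_neg_one_pow_mul_choose {R : Type*} [CommRing R] (g : ℕ → R) (N : ℕ) :
    ∑ i ∈ range (N + 2), (-1) ^ i * ((N + 1).choose i : R) * g i =
      ∑ i ∈ range (N + 1), (-1) ^ i * (N.choose i : R) * (g i - g (i + 1)) := by
  have shifted : ∑ i ∈ range (N + 1), (-1) ^ (i + 1) * (N.choose (i + 1) : R) * g (i + 1) + g 0 =
      ∑ i ∈ range (N + 1), (-1) ^ i * (N.choose i : R) * g i := by
    rw [sum_range_succ, Nat.choose_succ_self, sum_range_succ' _ N]
    simp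
  have negated : ∑ i ∈ range (N + 1), (-1) ^ (i + 1) * (N.choose i : R) * g (i + 1) =
      -∑ i ∈ range (N + 1), (-1) ^ i * (N.choose i : R) * g (i + 1) := by
    rw [← sum_neg_distrib]
    exact sum_congr rfl fun i _ => by ring
  simp only [sum_range_succ' _ (N + 1), Nat.choose_succ_succ', Nat.cast_add, mul_add, add_mul,
    sum_add_distrib, mul_sub, sum_sub_distrib, Nat.choose_zero_right, Nat.cast_one, pow_zero,
    one_mul]
  linear_combination shifted + negated

lemma f_two_succ (N : ℕ) (K : ℤ) (m : ℕ) : f (N + 1) K m 2 = 2 * f N K m 2 + f N (K - 1) m 2 := by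
  rw [f, sum_range_succ_neg_one_pow_mul_choose, f, f, mul_sum, ← sum_add_distrib]
  refine sum_congr rfl fun i hi => ?_
  have hi : i ≤ N := Nat.lt_succ_iff.mp (mem_range.mp hi)
  rw [show (N + 1) * 2 + m - i * 2 = (N * 2 + m - i * 2) + 1 + 1 by omega,
    show (N + 1) * 2 + m - (i + 1) * 2 = N * 2 + m - i * 2 by omega,
    chooseZ_succ, chooseZ_succ, chooseZ_succ]
  push_cast
  rw [show (N : ℤ) + 1 + K - 1 = N + K by ring, ← add_sub_assoc]
  ring

lemma f_zero_left (K : ℤ) (m p : ℕ) : f 0 K m p = chooseZ m K := by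
  simp [f]

lemma f_two_eq_zero_of_neg {N m : ℕ} {K : ℤ} (hK : K < 0) : f N K m 2 = 0 := by
  induction N generalizing K with
  | zero => rw [f_zero_left, chooseZ, if_neg (not_le.mpr hK)]
  | succ N ih => rw [f_two_succ, ih hK, ih (by omega), mul_zero, add_zero]

lemma f_two_eq_zero_of_lt {N m : ℕ} {K : ℤ} (hK : N + m < K) : f N K m 2 = 0 := by
  induction N generalizing K with
  | zero =>
    rw [f_zero_left, chooseZ, if_pos (by omega), Nat.choose_eq_zero_of_lt (by omega), Nat.cast_zero]
  | succ N ih =>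
    push_cast at hK
    rw [f_two_succ, ih (by omega), ih (by omega), mul_zero, add_zero]

lemma c_eq_neg_one_pow_mul_f {n : ℕ} {k : ℤ} {m p a b : ℕ} (hn : n = a + b + m)
    (hk : k = a + m - b) (hb : b ≤ a + m) : c n k m p = (-1) ^ b * f a b m p := by
  subst hn hk
  rw [c, if_pos (by push_cast; omega), show (((a + b + m : ℕ) : ℤ) - (a + m - b)) / 2 = b by omega,
    show (((a + b + m : ℕ) : ℤ) + (a + m - b) - 2 * m) / 2 = a by omega, Int.toNat_natCast,
    Int.toNat_natCast]

lemma c_two_eq_neg_one_pow_mul_f {n : ℕ} {k : ℤ} {m a b : ℕ} (hn : n = a + b + m)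
    (hk : k = a + m - b) : c n k m 2 = (-1) ^ b * f a b m 2 := by
  by_cases hb : b ≤ a + m
  · exact c_eq_neg_one_pow_mul_f hn hk hb
  · rw [c, if_neg (by omega), f_two_eq_zero_of_lt (by omega), mul_zero]

lemma c_two_add_two {n m : ℕ} (hm : 2 * m ≤ n + 1) (k : ℤ) :
    c (n + 2) k m 2 = 2 * c (n + 1) (k - 1) m 2 - c n k m 2 := by
  by_cases hk : 0 ≤ k ∧ k ≤ n + 2 ∧ (n : ℤ) % 2 = k % 2 ∧ 2 * m ≤ n + 2 + k
  swap
  · rw [c, c, c, if_neg (by push_cast; omega), if_neg (by push_cast; omega),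
      if_neg (by omega)]
    ring
  obtain ⟨a, b, hn, rfl⟩ : ∃ a b : ℕ, n + 2 = a + b + m ∧ k = a + m - b :=
    ⟨((n + 2 + k - 2 * m) / 2).toNat, ((n + 2 - k) / 2).toNat, by omega, by omega⟩
  -- At `a = 0` all three terms vanish: `f 0 b m 2 = C(m, b)` with `m < b` by `hm`.
  rcases a with _ | a
  · rw [c_two_eq_neg_one_pow_mul_f hn rfl, f_two_eq_zero_of_lt (by omega), c, c,
      if_neg (by push_cast; omega), if_neg (by push_cast; omega)]
    ring
  rcases b with _ | b
  · rw [c_two_eq_neg_one_pow_mul_f hn rfl, c_two_eq_neg_one_pow_mul_f (a := a) (b := 0) (by omega)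
      (by push_cast; ring), c, if_neg (by push_cast; omega), f_two_succ]
    push_cast
    rw [f_two_eq_zero_of_neg (K := -1) (by norm_num)]
    ring
  rw [c_two_eq_neg_one_pow_mul_f hn rfl, c_two_eq_neg_one_pow_mul_f (a := a) (b := b + 1) (by omega)
    (by push_cast; ring), c_two_eq_neg_one_pow_mul_f (a := a) (b := b) (by omega) (by push_cast; ring),
    f_two_succ]
  push_cast
  rw [add_sub_cancel_right]
  ring

lemma coeff_P (n m p j : ℕ) : (P n m p).coeff j = (c n j m p : ℝ) := by
  rw [P, finsetSum_coeff]
  simp only [coeff_C_mul, coeff_X_pow, mul_ite, mul_one, mul_zero, sum_ite_eq, mem_range]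
  split_ifs with hj
  · rfl
  · rw [c, if_neg (by omega), Int.cast_zero]

lemma coeff_X_mul_P (n m p j : ℕ) : (X * P n m p).coeff j = (c n (j - 1) m p : ℝ) := by
  rcases j with _ | j
  · rw [mul_coeff_zero, coeff_X_zero, zero_mul, c, if_neg (by omega), Int.cast_zero]
  · rw [coeff_X_mul, coeff_P]
    push_cast
    rw [add_sub_cancel_right]

lemma P_two_add_two {n m : ℕ} (hm : 2 * m ≤ n + 1) :
    P (n + 2) m 2 = 2 * X * P (n + 1) m 2 - P n m 2 := by
  ext j
  rw [coeff_sub, mul_assoc, coeff_ofNat_mul, coeff_X_mul_P, coeff_P, coeff_P, c_two_add_two hm]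
  push_cast
  ring

lemma P_three : P 3 2 2 = (X ^ 2 - 1) * U ℝ 1 := by
  have h0 : c 3 0 2 2 = 0 := by decide
  have h1 : c 3 1 2 2 = -2 := by decide
  have h2 : c 3 2 2 2 = 0 := by decide
  have h3 : c 3 3 2 2 = 2 := by decide
  simp only [P, sum_range_succ, range_one, sum_singleton, Nat.cast_ofNat, CharP.cast_eq_zero,
    Nat.cast_one, map_intCast, h0, h1, h2, h3, U_one]
  push_cast
  ring

lemma P_four : P 4 2 2 = (X ^ 2 - 1) * U ℝ 2 := by
  have h0 : c 4 0 2 2 = 1 := by decide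
  have h1 : c 4 1 2 2 = 0 := by decide
  have h2 : c 4 2 2 2 = -5 := by decide
  have h3 : c 4 3 2 2 = 0 := by decide
  have h4 : c 4 4 2 2 = 4 := by decide
  simp only [P, sum_range_succ, range_one, sum_singleton, Nat.cast_ofNat, CharP.cast_eq_zero,
    Nat.cast_one, map_intCast, h0, h1, h2, h3, h4, U_two]
  push_cast
  ring

lemma P_add_three_two_two (j : ℕ) : P (j + 3) 2 2 = (X ^ 2 - 1) * U ℝ ↑(j + 1) := by
  induction j using Nat.twoStepInduction with
  | zero => exact P_three
  | one => exact P_four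
  | more j ih₀ ih₁ =>
    rw [P_two_add_two (by omega), ih₁, ih₀]
    push_cast
    rw [show (j : ℤ) + 2 + 1 = j + 1 + 2 by ring, U_add_two]
    ring

lemma degree_P_two_two {n : ℕ} (hn : 3 ≤ n) : (P n 2 2).degree = n := by
  obtain ⟨j, rfl⟩ : ∃ j, n = j + 3 := ⟨n - 3, by omega⟩
  rw [P_add_three_two_two, degree_mul, ← C_1, degree_X_pow_sub_C two_pos, degree_U_natCast]
  norm_cast
  omega

lemma isRoot_P_two_two_cos {n : ℕ} (hn : 3 ≤ n) (k : ℕ) :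
    (P n 2 2).IsRoot (cos (k * π / ((n : ℝ) - 1))) := by
  obtain ⟨j, rfl⟩ : ∃ j, n = j + 3 := ⟨n - 3, by omega⟩
  set θ := k * π / (((j + 3 : ℕ) : ℝ) - 1)
  have hθ : ((j + 1 : ℕ) + 1 : ℝ) * θ = k * π := by
    have hden : ((j + 3 : ℕ) : ℝ) - 1 = j + 2 := by push_cast; ring
    simp only [θ, hden]
    push_cast
    field_simp
    ring
  have hU := U_real_cos θ ↑(j + 1)
  rw [Int.cast_natCast, hθ, sin_nat_mul_pi] at hU
  rw [IsRoot, P_add_three_two_two]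
  simp only [eval_mul, eval_sub, eval_pow, eval_X, eval_one]
  linear_combination (-sin θ) * hU + (eval (cos θ) (U ℝ ↑(j + 1))) * sin_sq_add_cos_sq θ

lemma nodup_map_cos_mul_pi_div {n : ℕ} (hn : 2 ≤ n) :
    ((range n).val.map fun k : ℕ => cos (k * π / ((n : ℝ) - 1))).Nodup := by
  have hpos : (0 : ℝ) < n - 1 := by
    rw [sub_pos, Nat.one_lt_cast]
    omega
  refine (range n).nodup_map_iff_injOn.mpr (injOn_cos.comp ?_ fun k hk => ⟨by positivity, ?_⟩)
  · intro x _ y _ hxy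
    field_simp at hxy
    exact_mod_cast hxy
  · rw [div_le_iff₀ hpos, mul_comm]
    gcongr
    rw [le_sub_iff_add_le]
    exact_mod_cast mem_range.mp hk

lemma roots_P_two_two {n : ℕ} (hn : 3 ≤ n) :
    (P n 2 2).roots = (range n).val.map fun k : ℕ => cos (k * π / ((n : ℝ) - 1)) := by
  have hinj := (range n).nodup_map_iff_injOn.mp (nodup_map_cos_mul_pi_div (by omega))
  rw [← image_val_of_injOn hinj]
  refine roots_eq_of_degree_eq_card (fun x hx => ?_) ?_
  · obtain ⟨k, -, rfl⟩ := mem_image.mp hx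
    exact isRoot_P_two_two_cos hn k
  · rw [card_image_of_injOn hinj, card_range, degree_P_two_two hn]

/-- For n ≥ 3, the real roots of `P_n` are exactly the n pairwise distinct
numbers `cos(kπ/(n-1))`, k = 0, …, n-1; all roots are simple and lie in [-1, 1]. -/
theorem statement3 (n : ℕ) (hn : 3 ≤ n) :
    ((Finset.range n).val.map (fun k : ℕ => Real.cos (k * Real.pi / ((n : ℝ) - 1)))).Nodup ∧
    (P n 2 2).roots =
      (Finset.range n).val.map (fun k : ℕ => Real.cos (k * Real.pi / ((n : ℝ) - 1))) ∧
    (∀ x : ℝ, (P n 2 2).IsRoot x →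
      (P n 2 2).rootMultiplicity x = 1 ∧ x ∈ Set.Icc (-1 : ℝ) 1) := by
  have hnodup := nodup_map_cos_mul_pi_div (n := n) (by omega)
  have hroots := roots_P_two_two hn
  have hP : P n 2 2 ≠ 0 := fun h => by simpa [h] using degree_P_two_two hn
  refine ⟨hnodup, hroots, fun x hx => ?_⟩
  have hmem : x ∈ (range n).val.map fun k : ℕ => cos (k * π / ((n : ℝ) - 1)) :=
    hroots ▸ (mem_roots hP).mpr hx
  refine ⟨by rw [← count_roots, hroots, Multiset.count_eq_one_of_mem hnodup hmem], ?_⟩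
  obtain ⟨k, -, rfl⟩ := Multiset.mem_map.mp hmem
  exact ⟨neg_one_le_cos _, cos_le_one _⟩
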